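/- Let p be prime and Ω a tile of ℤ_{p^n} × ℤ_p with |Ω| = p^t and |I_Ω| = t, where I_Ω = {i : (p^i, 0) ∈ Z_Ω}. Then the projection π_1(Ω) ⊆ ℤ_{p^n} (to the first coordinate) has cardinality p^t and is a p-homogeneous subset of ℤ_{p^n}. -/

import Mathlib

open Finset Complex

attribute [local instance] Classical.propDecidable

/-- `(Ω, T)` is a tiling pair: every element of `G` has a unique representation
`ω + t` with `ω ∈ Ω`, `t ∈ T`. -/
def IsTilingPair {G : Type*} [AddCommGroup G] (Ω T : Finset G) : Prop :=
  ∀ g : G, ∃! x : G × G, x.1 ∈ Ω ∧ x.2 ∈ T ∧ x.1 + x.2 = g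

/-- The Fourier transform of the indicator function of `A ⊆ ℤ_{p^n} × ℤ_p`. -/
noncomputable def fourierA (p n : ℕ) (A : Finset (ZMod (p ^ n) × ZMod p))
    (d : ZMod (p ^ n) × ZMod p) : ℂ :=
  ∑ x ∈ A, Complex.exp (2 * Real.pi * Complex.I *
    ((x.1.val * d.1.val : ℕ) / (p ^ n : ℕ) + (x.2.val * d.2.val : ℕ) / (p : ℕ) : ℂ))

/-- `C ⊆ ℤ_{p^n}` is `p`-homogeneous with branched level set `I ⊆ {0,…,n-1}`. -/
def IsPHomogeneous (p n : ℕ) (C : Finset (ZMod (p ^ n))) (I : Finset ℕ) : Prop :=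
  I ⊆ Finset.range n ∧
    ∀ i ∈ Finset.range n, ∀ x ∈ C,
      ((C.filter fun y => y.val % p ^ i = x.val % p ^ i).image
          fun y => y.val % p ^ (i + 1)).card = if i ∈ I then p else 1

private lemma sum_range_mul' {M : Type*} [AddCommMonoid M] (f : ℕ → M) (a b : ℕ) :
    ∑ k ∈ Finset.range (a * b), f k
      = ∑ s ∈ Finset.range b, ∑ r ∈ Finset.range a, f (r + s * a) := by
  induction b with
  | zero => simp
  | succ b ih =>
    rw [Finset.sum_range_succ, ← ih, Nat.mul_succ,
      ← Finset.sum_range_add_sum_Ico f (Nat.le_add_right (a*b) a),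
      Finset.sum_Ico_eq_sum_range]
    simp [add_comm, mul_comm]

private lemma equal_coeffs (p : ℕ) (hp : p.Prime) (j : ℕ) (c : ℕ → ℕ)
    (h : ∑ k ∈ Finset.range (p ^ (j + 1)), (c k : ℂ) *
        Complex.exp (2 * Real.pi * Complex.I / ((p ^ (j + 1) : ℕ) : ℂ)) ^ k = 0) :
    ∀ r < p ^ j, ∀ s < p, c (r + s * p ^ j) = c r := by
  set q := p ^ j with hq
  have hq0 : 0 < q := pow_pos hp.pos j
  have hp1 : 1 < p := hp.one_lt
  have hMq : p ^ (j + 1) = q * p := by rw [hq, pow_succ]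
  have hM0 : p ^ (j + 1) ≠ 0 := (pow_pos hp.pos _).ne'
  set ζ : ℂ := Complex.exp (2 * Real.pi * Complex.I / ((p ^ (j + 1) : ℕ) : ℂ)) with hζdef
  have hζ : IsPrimitiveRoot ζ (p ^ (j + 1)) := Complex.isPrimitiveRoot_exp _ hM0
  have hη : IsPrimitiveRoot (ζ ^ q) p := hζ.pow (Nat.pos_of_ne_zero hM0) hMq
  have hgeom : ∑ s ∈ Finset.range p, (ζ ^ q) ^ s = 0 := hη.geom_sum_eq_zero hp1
  rw [hMq, sum_range_mul' (fun k => (c k : ℂ) * ζ ^ k) q p] at h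
  have hp' : p - 1 + 1 = p := Nat.succ_pred_eq_of_pos hp.pos
  have hswap : ∑ s ∈ Finset.range p, ∑ r ∈ Finset.range q,
      (c (r + (p - 1) * q) : ℂ) * ζ ^ (r + s * q) = 0 := by
    rw [Finset.sum_comm]
    apply Finset.sum_eq_zero
    intro r _
    have : ∀ s : ℕ, (c (r + (p - 1) * q) : ℂ) * ζ ^ (r + s * q)
        = (c (r + (p - 1) * q) : ℂ) * ζ ^ r * (ζ ^ q) ^ s := by
      intro s; rw [pow_add, mul_comm s q, pow_mul]; ring
    simp only [this]
    rw [← Finset.mul_sum, hgeom, mul_zero]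
  have hA : ∑ k ∈ Finset.range ((p - 1) * q),
      ((c k : ℂ) - (c (k % q + (p - 1) * q) : ℂ)) * ζ ^ k = 0 := by
    rw [show Finset.range ((p - 1) * q) = Finset.range (q * (p - 1)) by rw [mul_comm],
      sum_range_mul' (fun k => ((c k : ℂ) - (c (k % q + (p - 1) * q) : ℂ)) * ζ ^ k) q (p - 1)]
    have hmod : ∀ s ∈ Finset.range (p - 1), ∀ r ∈ Finset.range q,
        ((c (r + s * q) : ℂ) - (c ((r + s * q) % q + (p - 1) * q) : ℂ)) * ζ ^ (r + s * q)
          = (c (r + s * q) : ℂ) * ζ ^ (r + s * q)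
            - (c (r + (p - 1) * q) : ℂ) * ζ ^ (r + s * q) := by
      intro s _ r hr
      rw [Nat.add_mul_mod_self_right, Nat.mod_eq_of_lt (Finset.mem_range.mp hr), sub_mul]
    rw [Finset.sum_congr rfl fun s hs => Finset.sum_congr rfl (hmod s hs)]
    have h1 : (∑ s ∈ Finset.range (p - 1), ∑ r ∈ Finset.range q,
        (c (r + s * q) : ℂ) * ζ ^ (r + s * q))
        + ∑ r ∈ Finset.range q, (c (r + (p - 1) * q) : ℂ) * ζ ^ (r + (p - 1) * q) = 0 := by
      rw [← Finset.sum_range_succ (fun s => ∑ r ∈ Finset.range q,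
        (c (r + s * q) : ℂ) * ζ ^ (r + s * q)) (p - 1), hp']
      exact h
    have h2 : (∑ s ∈ Finset.range (p - 1), ∑ r ∈ Finset.range q,
        (c (r + (p - 1) * q) : ℂ) * ζ ^ (r + s * q))
        + ∑ r ∈ Finset.range q, (c (r + (p - 1) * q) : ℂ) * ζ ^ (r + (p - 1) * q) = 0 := by
      rw [← Finset.sum_range_succ (fun s => ∑ r ∈ Finset.range q,
        (c (r + (p - 1) * q) : ℂ) * ζ ^ (r + s * q)) (p - 1), hp']
      exact hswap
    simp only [Finset.sum_sub_distrib]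
    linear_combination h1 - h2
  set D : ℕ → ℚ := fun k => (c k : ℚ) - (c (k % q + (p - 1) * q) : ℚ) with hD
  set P : Polynomial ℚ := ∑ k ∈ Finset.range ((p - 1) * q), Polynomial.C (D k) * Polynomial.X ^ k
    with hP
  have haev : Polynomial.aeval ζ P = 0 := by
    rw [hP, map_sum]
    simp only [map_mul, Polynomial.aeval_C, map_pow, Polynomial.aeval_X]
    rw [← hA]
    apply Finset.sum_congr rfl
    intro k _
    congr 1
    rw [eq_ratCast (algebraMap ℚ ℂ) (D k), hD]
    push_cast
    ring
  have hPz : P = 0 := by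
    by_contra hPne
    have hdeg := minpoly.degree_le_of_ne_zero ℚ ζ hPne haev
    have hmin : minpoly ℚ ζ = Polynomial.cyclotomic (p ^ (j + 1)) ℚ :=
      (Polynomial.cyclotomic_eq_minpoly_rat hζ (Nat.pos_of_ne_zero hM0)).symm
    have hdegmin : (minpoly ℚ ζ).degree = (((p - 1) * q : ℕ) : WithBot ℕ) := by
      rw [hmin, Polynomial.degree_eq_natDegree (Polynomial.cyclotomic_ne_zero _ ℚ),
        Polynomial.natDegree_cyclotomic, Nat.totient_prime_pow hp (Nat.succ_pos j)]
      norm_cast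
      simp [hq, Nat.succ_sub_one, mul_comm]
    have hdegP : P.degree < (((p - 1) * q : ℕ) : WithBot ℕ) := by
      apply lt_of_le_of_lt (Polynomial.degree_sum_le _ _)
      rw [Finset.sup_lt_iff (WithBot.bot_lt_coe _)]
      intro k hk
      exact lt_of_le_of_lt (Polynomial.degree_C_mul_X_pow_le _ _)
        (by exact_mod_cast Finset.mem_range.mp hk)
    rw [hdegmin] at hdeg
    exact absurd (lt_of_le_of_lt hdeg hdegP) (lt_irrefl _)
  have key : ∀ k < (p - 1) * q, c k = c (k % q + (p - 1) * q) := by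
    intro k hk
    have h0 := congrArg (fun Q => Polynomial.coeff Q k) hPz
    simp only [hP, Polynomial.finset_sum_coeff, Polynomial.coeff_C_mul, Polynomial.coeff_X_pow,
      Polynomial.coeff_zero, mul_ite, mul_one, mul_zero] at h0
    rw [Finset.sum_ite_eq (Finset.range ((p - 1) * q)) k D] at h0
    rw [if_pos (Finset.mem_range.mpr hk), hD] at h0
    have := sub_eq_zero.mp h0
    exact_mod_cast this
  intro r hr s hs
  have hrk : c r = c (r + (p - 1) * q) := by
    have h0 := key r (lt_of_lt_of_le hr (Nat.le_mul_of_pos_left q (by omega)))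
    rwa [Nat.mod_eq_of_lt hr] at h0
  rcases eq_or_lt_of_le (Nat.lt_succ_iff.mp (by omega : s < (p - 1) + 1)) with hsp | hsp
  · rw [hsp, ← hrk]
  · have hk : r + s * q < (p - 1) * q := by
      calc r + s * q < q + s * q := by omega
        _ = (s + 1) * q := by ring
        _ ≤ (p - 1) * q := Nat.mul_le_mul_right q (by omega)
    have h0 := key (r + s * q) hk
    rwa [Nat.add_mul_mod_self_right, Nat.mod_eq_of_lt hr, ← hrk] at h0

private lemma mod_succ_digit (a q m : ℕ) :
    a % (q * m) = a % q + a / q % m * q := by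
  conv_lhs => rw [← Nat.div_add_mod (a % (q * m)) q]
  rw [Nat.mod_mul_right_div_self, Nat.mod_mod_of_dvd _ (dvd_mul_right q m)]
  ring

private lemma digit_iff (p : ℕ) (hp : 0 < p) (j r s a : ℕ) (hr : r < p ^ j) (_hs : s < p) :
    a % p ^ (j + 1) = r + s * p ^ j ↔ (a % p ^ j = r ∧ a / p ^ j % p = s) := by
  have hq0 : 0 < p ^ j := pow_pos hp j
  rw [pow_succ, mod_succ_digit]
  constructor
  · intro h
    have h1 : a % p ^ j = r := by
      have hlt : a % p ^ j < p ^ j := Nat.mod_lt _ hq0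
      have := congrArg (· % p ^ j) h
      simpa [Nat.add_mul_mod_self_right, Nat.mod_eq_of_lt hlt, Nat.mod_eq_of_lt hr] using this
    refine ⟨h1, ?_⟩
    rw [h1] at h
    have := Nat.add_left_cancel h
    exact (Nat.eq_of_mul_eq_mul_right hq0 this.symm).symm
  · rintro ⟨h1, h2⟩
    rw [h1, h2]

private lemma mu_partition {α : Type*} (p : ℕ) (hp : 0 < p) (Ω : Finset α) (v : α → ℕ)
    (j r : ℕ) (hr : r < p ^ j) :
    (Ω.filter fun ω => v ω % p ^ j = r).card =
      ∑ s ∈ Finset.range p, (Ω.filter fun ω => v ω % p ^ (j + 1) = r + s * p ^ j).card := by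
  rw [Finset.card_eq_sum_card_fiberwise
    (f := fun ω => v ω / p ^ j % p) (t := Finset.range p)
    (fun ω _ => Finset.mem_range.mpr (Nat.mod_lt _ hp))]
  apply Finset.sum_congr rfl
  intro s hs
  congr 1
  rw [Finset.filter_filter]
  apply Finset.filter_congr
  intro ω _
  rw [digit_iff p hp j r s (v ω) hr (Finset.mem_range.mp hs)]

private lemma fourier_eq (p n : ℕ) (hp : p.Prime) (Ω : Finset (ZMod (p ^ n) × ZMod p))
    (i : ℕ) (hi : i < n) :
    fourierA p n Ω ((p : ZMod (p ^ n)) ^ i, (0 : ZMod p)) =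
      ∑ k ∈ Finset.range (p ^ (n - i)),
        ((Ω.filter fun ω => ω.1.val % p ^ (n - i) = k).card : ℂ) *
          Complex.exp (2 * Real.pi * Complex.I / ((p ^ (n - i) : ℕ) : ℂ)) ^ k := by
  haveI : NeZero (p ^ n) := ⟨(pow_pos hp.pos n).ne'⟩
  haveI : NeZero p := ⟨hp.pos.ne'⟩
  set M := p ^ (n - i) with hM
  have hM0 : 0 < M := pow_pos hp.pos _
  have hMC : ((M : ℕ) : ℂ) ≠ 0 := Nat.cast_ne_zero.mpr hM0.ne'
  set ζ : ℂ := Complex.exp (2 * Real.pi * Complex.I / ((M : ℕ) : ℂ)) with hζ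
  have hterm : ∀ ω : ZMod (p ^ n) × ZMod p,
      Complex.exp (2 * Real.pi * Complex.I *
        ((ω.1.val * ((p : ZMod (p ^ n)) ^ i, (0 : ZMod p)).1.val : ℕ) / (p ^ n : ℕ)
          + (ω.2.val * ((p : ZMod (p ^ n)) ^ i, (0 : ZMod p)).2.val : ℕ) / (p : ℕ) : ℂ))
      = ζ ^ (ω.1.val % M) := by
    intro ω
    have hd1 : ((p : ZMod (p ^ n)) ^ i).val = p ^ i := by
      rw [show (p : ZMod (p ^ n)) ^ i = ((p ^ i : ℕ) : ZMod (p ^ n)) by push_cast; ring]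
      exact ZMod.val_natCast_of_lt (Nat.pow_lt_pow_right hp.one_lt hi)
    have hd2 : ((0 : ZMod p)).val = 0 := ZMod.val_zero
    set a := ω.1.val with ha
    set b := a / M with hb
    set r := a % M with hr
    have hpi : (p : ℂ) ^ i ≠ 0 := pow_ne_zero _ (Nat.cast_ne_zero.mpr hp.pos.ne')
    have hpn : ((p ^ n : ℕ) : ℂ) = ((M : ℕ) : ℂ) * (p : ℂ) ^ i := by
      rw [hM]; push_cast; rw [← pow_add]; congr 1; omega
    have haC : (a : ℂ) = ((M : ℕ) : ℂ) * (b : ℂ) + (r : ℂ) := by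
      exact_mod_cast congrArg (fun x : ℕ => (x : ℂ)) (Nat.div_add_mod a M).symm
    have hexp1 : (2 * Real.pi * Complex.I *
        ((a * ((p : ZMod (p ^ n)) ^ i).val : ℕ) / ((p ^ n : ℕ))
          + ((ω.2.val * ((0 : ZMod p)).val : ℕ) / (p : ℕ)) : ℂ))
        = (b : ℂ) * (2 * Real.pi * Complex.I)
          + (r : ℂ) * (2 * Real.pi * Complex.I / ((M : ℕ) : ℂ)) := by
      rw [hd1, hd2, Nat.mul_zero, Nat.cast_zero, zero_div, add_zero]
      rw [show ((a * p ^ i : ℕ) : ℂ) = (a : ℂ) * (p : ℂ) ^ i by push_cast; ring]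
      rw [hpn, mul_div_mul_right _ _ hpi]
      field_simp
      linear_combination haC
    rw [hexp1, Complex.exp_add]
    rw [show (b : ℂ) * (2 * Real.pi * Complex.I)
        = ((b : ℤ) : ℂ) * (2 * Real.pi * Complex.I) by push_cast; ring]
    rw [Complex.exp_int_mul_two_pi_mul_I, one_mul, hζ, ← Complex.exp_nat_mul]
  rw [fourierA, Finset.sum_congr rfl fun ω _ => hterm ω]
  rw [← Finset.sum_fiberwise_of_maps_to (g := fun ω : ZMod (p ^ n) × ZMod p => ω.1.val % M)
    (t := Finset.range M) (fun ω _ => Finset.mem_range.mpr (Nat.mod_lt _ hM0))]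
  apply Finset.sum_congr rfl
  intro k _
  rw [Finset.sum_congr rfl (fun ω hω => by
      rw [(Finset.mem_filter.mp hω).2] :
    ∀ ω ∈ Ω.filter fun ω => ω.1.val % M = k, ζ ^ (ω.1.val % M) = ζ ^ k)]
  rw [Finset.sum_const, nsmul_eq_mul]

/-- If `Ω` is a tile of `ℤ_{p^n} × ℤ_p` with `|Ω| = p^t` and `|I_Ω| = t`, then the
first-coordinate projection `π₁(Ω)` has cardinality `p^t` and is `p`-homogeneous. -/
theorem projection_pHomogeneous (p n t : ℕ) (hp : p.Prime) (ht1 : 1 ≤ t) (htn : t ≤ n)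
    (Ω : Finset (ZMod (p ^ n) × ZMod p)) (htile : ∃ T, IsTilingPair Ω T)
    (hcard : Ω.card = p ^ t)
    (hI : ((Finset.range n).filter fun i =>
        fourierA p n Ω ((p : ZMod (p ^ n)) ^ i, (0 : ZMod p)) = 0).card = t) :
    (Ω.image Prod.fst).card = p ^ t ∧
      ∃ I, IsPHomogeneous p n (Ω.image Prod.fst) I := by
  haveI : NeZero (p ^ n) := ⟨(pow_pos hp.pos n).ne'⟩
  haveI : NeZero p := ⟨hp.pos.ne'⟩
  set C := Ω.image Prod.fst with hC
  set μ : ℕ → ℕ → ℕ := fun j r => (Ω.filter fun ω => ω.1.val % p ^ j = r).card with hμ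
  set I₀ := (Finset.range n).filter (fun i =>
      fourierA p n Ω ((p : ZMod (p ^ n)) ^ i, (0 : ZMod p)) = 0) with hI₀
  set J := I₀.image (fun i => n - 1 - i) with hJ
  have hI₀sub : I₀ ⊆ Finset.range n := by rw [hI₀]; exact Finset.filter_subset _ _
  have hJsub : J ⊆ Finset.range n := by
    intro j hj
    obtain ⟨i, hi, rfl⟩ := Finset.mem_image.mp hj
    have := Finset.mem_range.mp (hI₀sub hi)
    exact Finset.mem_range.mpr (by omega)
  have hJcard : J.card = t := by
    rw [hJ, Finset.card_image_of_injOn, hI]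
    intro i hi i' hi' hii
    simp only at hii
    have h1 := Finset.mem_range.mp (hI₀sub (Finset.mem_coe.mp hi))
    have h2 := Finset.mem_range.mp (hI₀sub (Finset.mem_coe.mp hi'))
    omega
  have hsplit : ∀ j ∈ J, ∀ r < p ^ j, ∀ s < p, μ (j + 1) (r + s * p ^ j) = μ (j + 1) r := by
    intro j hj
    obtain ⟨i, hiI, hij⟩ := Finset.mem_image.mp hj
    have hin : i < n := Finset.mem_range.mp (hI₀sub hiI)
    have hni : n - i = j + 1 := by omega
    have hzero : fourierA p n Ω ((p : ZMod (p ^ n)) ^ i, 0) = 0 := by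
      rw [hI₀] at hiI
      exact (Finset.mem_filter.mp hiI).2
    rw [fourier_eq p n hp Ω i hin, hni] at hzero
    exact equal_coeffs p hp j (fun k => μ (j + 1) k) hzero
  have hpart : ∀ j r, r < p ^ j → μ j r = ∑ s ∈ Finset.range p, μ (j + 1) (r + s * p ^ j) :=
    fun j r hr => mu_partition p hp.pos Ω (fun ω => ω.1.val) j r hr
  set a : ℕ → ℕ := fun j => (J.filter (· < j)).card with haa
  have ha_le : ∀ j, a j ≤ t := fun j => hJcard ▸ Finset.card_filter_le _ _
  have ha_n : a n = t := by
    rw [haa]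
    simp only
    rw [Finset.filter_true_of_mem (fun j hj => Finset.mem_range.mp (hJsub hj)), hJcard]
  have ha_succ_mem : ∀ j ∈ J, a (j + 1) = a j + 1 := by
    intro j hj
    have hins : J.filter (· < j + 1) = insert j (J.filter (· < j)) := by
      ext k
      simp only [Finset.mem_filter, Finset.mem_insert]
      constructor
      · rintro ⟨hk, hlt⟩
        rcases Nat.lt_succ_iff_lt_or_eq.mp hlt with h | h
        · exact Or.inr ⟨hk, h⟩
        · exact Or.inl h
      · rintro (rfl | ⟨hk, hlt⟩)
        · exact ⟨hj, Nat.lt_succ_self _⟩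
        · exact ⟨hk, Nat.lt_succ_of_lt hlt⟩
    rw [haa]
    simp only
    rw [hins, Finset.card_insert_of_notMem (by simp)]
  have ha_succ_not : ∀ j, j ∉ J → a (j + 1) = a j := by
    intro j hj
    have hins : J.filter (· < j + 1) = J.filter (· < j) := by
      ext k
      simp only [Finset.mem_filter]
      constructor
      · rintro ⟨hk, hlt⟩
        rcases Nat.lt_succ_iff_lt_or_eq.mp hlt with h | h
        · exact ⟨hk, h⟩
        · exact absurd (h ▸ hk) hj
      · rintro ⟨hk, hlt⟩
        exact ⟨hk, Nat.lt_succ_of_lt hlt⟩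
    rw [haa]
    simp only [hins]
  have hdigitlt : ∀ (x : ZMod (p ^ n)) (j : ℕ), x.val % p ^ j < p ^ j :=
    fun x j => Nat.mod_lt _ (pow_pos hp.pos j)
  have hmemchain : ∀ (x : ZMod (p ^ n)) (j : ℕ),
      x.val % p ^ (j + 1) = x.val % p ^ j + x.val / p ^ j % p * p ^ j := by
    intro x j
    rw [pow_succ, mod_succ_digit]
  have hchain : ∀ x ∈ C, ∀ j, j ≤ n → μ j (x.val % p ^ j) = p ^ (t - a j) := by
    intro x hx
    have hν0 : μ 0 (x.val % 1) = p ^ t := by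
      rw [hμ]
      simp only [pow_zero, Nat.mod_one]
      simp [hcard]
    have hνn : 1 ≤ μ n (x.val % p ^ n) := by
      obtain ⟨ω, hωΩ, hωx⟩ := Finset.mem_image.mp hx
      exact Finset.card_pos.mpr ⟨ω, Finset.mem_filter.mpr ⟨hωΩ, by rw [hωx]⟩⟩
    have hmul : ∀ j ∈ J, μ j (x.val % p ^ j) = p * μ (j + 1) (x.val % p ^ (j + 1)) := by
      intro j hj
      have hs0 : x.val / p ^ j % p < p := Nat.mod_lt _ hp.pos
      calc μ j (x.val % p ^ j)
          = ∑ s ∈ Finset.range p, μ (j + 1) (x.val % p ^ j + s * p ^ j) :=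
            hpart j _ (hdigitlt x j)
        _ = ∑ _s ∈ Finset.range p, μ (j + 1) (x.val % p ^ j) :=
            Finset.sum_congr rfl fun s hs =>
              hsplit j hj _ (hdigitlt x j) s (Finset.mem_range.mp hs)
        _ = p * μ (j + 1) (x.val % p ^ j) := by
            rw [Finset.sum_const, Finset.card_range, smul_eq_mul]
        _ = p * μ (j + 1) (x.val % p ^ (j + 1)) := by
            rw [hmemchain x j, hsplit j hj _ (hdigitlt x j) _ hs0]
    have hle : ∀ j, μ (j + 1) (x.val % p ^ (j + 1)) ≤ μ j (x.val % p ^ j) := by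
      intro j
      rw [hpart j _ (hdigitlt x j), hmemchain x j]
      exact Finset.single_le_sum (f := fun s => μ (j + 1) (x.val % p ^ j + s * p ^ j))
        (fun i _ => Nat.zero_le _) (Finset.mem_range.mpr (Nat.mod_lt _ hp.pos))
    have hup : ∀ j, j ≤ n → μ j (x.val % p ^ j) * p ^ a j ≤ p ^ t := by
      intro j
      induction j with
      | zero =>
        intro _
        have ha0 : a 0 = 0 := by rw [haa]; simp
        rw [ha0, pow_zero, mul_one]
        exact le_of_eq hν0
      | succ j ih =>
        intro hj
        have hj' : j ≤ n := by omega
        specialize ih hj'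
        by_cases hjJ : j ∈ J
        · rw [ha_succ_mem j hjJ, pow_succ]
          calc μ (j + 1) (x.val % p ^ (j + 1)) * (p ^ a j * p)
              = p * μ (j + 1) (x.val % p ^ (j + 1)) * p ^ a j := by ring
            _ = μ j (x.val % p ^ j) * p ^ a j := by rw [← hmul j hjJ]
            _ ≤ p ^ t := ih
        · rw [ha_succ_not j hjJ]
          exact le_trans (Nat.mul_le_mul_right _ (hle j)) ih
    have hdown : ∀ k j, j + k = n → p ^ (t - a j) ≤ μ j (x.val % p ^ j) := by
      intro k
      induction k with
      | zero =>
        intro j hj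
        have hjn : j = n := by omega
        subst hjn
        rw [ha_n, Nat.sub_self, pow_zero]
        exact hνn
      | succ k ih =>
        intro j hj
        have hih := ih (j + 1) (by omega)
        by_cases hjJ : j ∈ J
        · rw [hmul j hjJ]
          have haj : a (j + 1) = a j + 1 := ha_succ_mem j hjJ
          have h1 : t - a j = t - a (j + 1) + 1 := by
            have := ha_le (j + 1)
            omega
          rw [h1, pow_succ]
          calc p ^ (t - a (j + 1)) * p = p * p ^ (t - a (j + 1)) := by ring
            _ ≤ p * μ (j + 1) (x.val % p ^ (j + 1)) := Nat.mul_le_mul_left p hih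
        · rw [show t - a j = t - a (j + 1) by rw [ha_succ_not j hjJ]]
          exact le_trans hih (hle j)
    intro j hj
    apply le_antisymm
    · have h1 := hup j hj
      have ht' : p ^ t = p ^ (t - a j) * p ^ a j := by
        rw [← pow_add]
        congr 1
        have := ha_le j
        omega
      rw [ht'] at h1
      exact Nat.le_of_mul_le_mul_right h1 (pow_pos hp.pos _)
    · exact hdown (n - j) j (by omega)
  have hfib : ∀ x ∈ C, (Ω.filter fun ω => ω.1 = x).card = 1 := by
    intro x hx
    have h1 : (Ω.filter fun ω => ω.1 = x)
        = Ω.filter fun ω => ω.1.val % p ^ n = x.val % p ^ n := by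
      apply Finset.filter_congr
      intro ω _
      have hv : ∀ y : ZMod (p ^ n), y.val % p ^ n = y.val :=
        fun y => Nat.mod_eq_of_lt (ZMod.val_lt y)
      rw [hv, hv]
      constructor
      · intro h; rw [h]
      · intro h; exact ZMod.val_injective _ h
    rw [h1]
    have h2 := hchain x hx n le_rfl
    rw [ha_n, Nat.sub_self, pow_zero] at h2
    exact h2
  have hCcard : C.card = p ^ t := by
    have h1 : Ω.card = ∑ x ∈ C, (Ω.filter fun ω => ω.1 = x).card :=
      Finset.card_eq_sum_card_fiberwise fun ω hω => Finset.mem_image_of_mem Prod.fst hω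
    rw [Finset.sum_congr rfl hfib, Finset.sum_const, smul_eq_mul, mul_one] at h1
    rw [← h1, hcard]
  refine ⟨hCcard, J, hJsub, ?_⟩
  intro i hirange x hxC
  have hin : i < n := Finset.mem_range.mp hirange
  set r := x.val % p ^ i with hr
  have hrlt : r < p ^ i := hdigitlt x i
  have himg : ((C.filter fun y => y.val % p ^ i = r).image fun y => y.val % p ^ (i + 1))
      = (Ω.filter fun ω => ω.1.val % p ^ i = r).image fun ω => ω.1.val % p ^ (i + 1) := by
    rw [hC, Finset.filter_image, Finset.image_image]
    rfl
  by_cases hiJ : i ∈ J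
  · rw [if_pos hiJ, himg]
    have himg2 : ((Ω.filter fun ω => ω.1.val % p ^ i = r).image fun ω => ω.1.val % p ^ (i + 1))
        = (Finset.range p).image fun s => r + s * p ^ i := by
      apply Finset.Subset.antisymm
      · intro v hv
        obtain ⟨ω, hω, rfl⟩ := Finset.mem_image.mp hv
        obtain ⟨hωΩ, hωr⟩ := Finset.mem_filter.mp hω
        apply Finset.mem_image.mpr
        refine ⟨ω.1.val / p ^ i % p, Finset.mem_range.mpr (Nat.mod_lt _ hp.pos), ?_⟩
        rw [← hωr]
        exact (hmemchain ω.1 i).symm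
      · intro v hv
        obtain ⟨s, hs, rfl⟩ := Finset.mem_image.mp hv
        have hs' := Finset.mem_range.mp hs
        have hpos : 0 < μ (i + 1) (r + s * p ^ i) := by
          have he := hsplit i hiJ r hrlt s hs'
          have hs0 : x.val / p ^ i % p < p := Nat.mod_lt _ hp.pos
          have he0 := hsplit i hiJ r hrlt _ hs0
          have hc := hchain x hxC (i + 1) hin
          rw [hmemchain x i, ← hr] at hc
          rw [he, ← he0, hc]
          exact pow_pos hp.pos _
        obtain ⟨ω, hω⟩ := Finset.card_pos.mp hpos
        obtain ⟨hωΩ, hωv⟩ := Finset.mem_filter.mp hω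
        apply Finset.mem_image.mpr
        refine ⟨ω, Finset.mem_filter.mpr ⟨hωΩ, ?_⟩, hωv⟩
        have hmm : ω.1.val % p ^ i = ω.1.val % p ^ (i + 1) % p ^ i :=
          (Nat.mod_mod_of_dvd _ (pow_dvd_pow p (Nat.le_succ i))).symm
        rw [hmm, hωv, Nat.add_mul_mod_self_right, Nat.mod_eq_of_lt hrlt]
    rw [himg2, Finset.card_image_of_injective _ ?_, Finset.card_range]
    intro s1 s2 h12
    exact Nat.eq_of_mul_eq_mul_right (pow_pos hp.pos i) (Nat.add_left_cancel h12)
  · rw [if_neg hiJ, himg]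
    have hone : ((Ω.filter fun ω => ω.1.val % p ^ i = r).image fun ω => ω.1.val % p ^ (i + 1))
        = {x.val % p ^ (i + 1)} := by
      apply Finset.Subset.antisymm
      · intro v hv
        obtain ⟨ω, hω, rfl⟩ := Finset.mem_image.mp hv
        obtain ⟨hωΩ, hωr⟩ := Finset.mem_filter.mp hω
        apply Finset.mem_singleton.mpr
        by_contra hne
        set y := ω.1 with hy
        have hyC : y ∈ C := Finset.mem_image_of_mem _ hωΩ
        have hs0 : x.val / p ^ i % p < p := Nat.mod_lt _ hp.pos
        have hs1 : y.val / p ^ i % p < p := Nat.mod_lt _ hp.pos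
        have hx1 : x.val % p ^ (i + 1) = r + x.val / p ^ i % p * p ^ i := by
          rw [hmemchain x i, ← hr]
        have hy1 : y.val % p ^ (i + 1) = r + y.val / p ^ i % p * p ^ i := by
          rw [hmemchain y i, hωr]
        have hsne : y.val / p ^ i % p ≠ x.val / p ^ i % p := by
          intro hE
          exact hne (by rw [hy1, hx1, hE])
        have hcx := hchain x hxC (i + 1) hin
        have hcy := hchain y hyC (i + 1) hin
        have hcxi : μ i r = p ^ (t - a i) := by
          rw [hr]
          exact hchain x hxC i hin.le
        have hai : a (i + 1) = a i := ha_succ_not i hiJ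
        have hsum := hpart i r hrlt
        have hge : μ (i + 1) (r + y.val / p ^ i % p * p ^ i)
            + μ (i + 1) (r + x.val / p ^ i % p * p ^ i)
            ≤ ∑ s ∈ Finset.range p, μ (i + 1) (r + s * p ^ i) := by
          rw [← Finset.sum_pair (f := fun s => μ (i + 1) (r + s * p ^ i)) hsne]
          apply Finset.sum_le_sum_of_subset
          intro s hs
          rcases Finset.mem_insert.mp hs with rfl | hs
          · exact Finset.mem_range.mpr hs1
          · rw [Finset.mem_singleton.mp hs]
            exact Finset.mem_range.mpr hs0
        rw [← hsum, ← hy1, ← hx1, hcx, hcy, hcxi, hai] at hge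
        have hposs : 0 < p ^ (t - a i) := pow_pos hp.pos _
        omega
      · intro v hv
        rw [Finset.mem_singleton.mp hv]
        apply Finset.mem_image.mpr
        obtain ⟨ω, hω, hωx⟩ := Finset.mem_image.mp hxC
        exact ⟨ω, Finset.mem_filter.mpr ⟨hω, by rw [hωx, hr]⟩, by rw [hωx]⟩
    rw [hone, Finset.card_singleton]
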